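/- The binary search procedure over the candidate list e_1, ..., e_k of a horizontal port u, maintaining the invariant that the augmentation to the left endpoint of the current sublist contains a decreasing cycle while the augmentation to the right endpoint does not, terminates with either a valid augmentation to e_1 or two consecutive candidates e_i, e_{i+1} such that Γ^u_{e_i} contains a decreasing cycle and Γ^u_{e_{i+1}} does not; in particular a valid augmentation for u exists and is found. -/
import Mathlib


/-- Binary search over the candidate list `e₁, …, e_k` of a horizontal port `u`.
`dec i` means the augmentation `Γ^u_{e_i}` contains a decreasing cycle, `validAug i`
means `Γ^u_{e_i}` is a valid augmentation.  Known facts: augmenting to the first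
candidate creates no increasing cycle, so if it creates no decreasing cycle it is valid
(`hfirst`); augmenting to the last candidate never creates a decreasing cycle (`hlast`);
and whenever consecutive candidates satisfy `dec i ∧ ¬ dec (i+1)`, a valid augmentation
for `u` exists (`hconsec`).  Then the binary search (maintaining the invariant that the
left endpoint's augmentation has a decreasing cycle while the right endpoint's does not)
terminates with either a valid augmentation to `e₁` or two consecutive candidates
`e_i, e_{i+1}` with `dec i ∧ ¬ dec (i+1)`; in particular a valid augmentation for `u`
exists and is found. -/
theorem binary_search_valid_augmentation
    (k : ℕ) (hk : 1 ≤ k)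
    (dec validAug : ℕ → Prop)
    (hfirst : ¬ dec 1 → validAug 1)
    (hlast : ¬ dec k)
    (hconsec : ∀ i, 1 ≤ i → i + 1 ≤ k → dec i → ¬ dec (i + 1) → ∃ j, validAug j) :
    ((¬ dec 1 ∧ validAug 1) ∨
      ∃ i, 1 ≤ i ∧ i + 1 ≤ k ∧ dec i ∧ ¬ dec (i + 1)) ∧
    ∃ j, validAug j := by
  by_cases h1 : dec 1
  · have key : ∀ m, 1 ≤ m → m ≤ k → ¬ dec m →
        ∃ i, 1 ≤ i ∧ i + 1 ≤ k ∧ dec i ∧ ¬ dec (i + 1) := by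
      intro m
      induction m with
      | zero => intro h; omega
      | succ n ih =>
        intro _ hmk hnd
        rcases Nat.eq_zero_or_pos n with hn | hn
        · subst hn; exact absurd h1 hnd
        · by_cases hdn : dec n
          · exact ⟨n, hn, hmk, hdn, hnd⟩
          · exact ih hn (by omega) hdn
    obtain ⟨i, hi⟩ := key k hk le_rfl hlast
    exact ⟨Or.inr ⟨i, hi⟩, hconsec i hi.1 hi.2.1 hi.2.2.1 hi.2.2.2⟩
  · exact ⟨Or.inl ⟨h1, hfirst h1⟩, ⟨1, hfirst h1⟩⟩
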